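/- If G is undetermined, then G+G+G is absorbing: o(G+G+G+H) = ∅ for every three-player impartial game H. -/
import Mathlib


inductive IGame : Type where
  | mk : List IGame → IGame

namespace IGame

def opts : IGame → List IGame
  | mk l => l

theorem sizeOf_lt_of_mem {g G : IGame} (h : g ∈ G.opts) : sizeOf g < sizeOf G := by
  cases G with
  | mk l =>
    have h2 : g ∈ l := h
    have := List.sizeOf_lt_of_mem h2
    simp only [mk.sizeOf_spec]
    omega

def add : IGame → IGame → IGame
  | G, H =>
    mk ((G.opts.attach.map fun g => add g.1 H) ++ (H.opts.attach.map fun h => add G h.1))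
termination_by G H => sizeOf G + sizeOf H
decreasing_by
  · have := sizeOf_lt_of_mem g.2; omega
  · have := sizeOf_lt_of_mem h.2; omega

inductive Player : Type where
  | N | O | P
  deriving DecidableEq

def out : IGame → Player → Prop
  | G, .N => ∃ g : {x // x ∈ G.opts}, out g.1 .P
  | G, .O => ∀ g : {x // x ∈ G.opts}, out g.1 .N
  | G, .P => ∀ g : {x // x ∈ G.opts}, out g.1 .O
termination_by G _ => sizeOf G
decreasing_by
  all_goals exact sizeOf_lt_of_mem g.2

theorem out_N {G : IGame} : out G .N ↔ ∃ g ∈ G.opts, out g .P := by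
  rw [out]
  exact ⟨fun ⟨g, h⟩ => ⟨g.1, g.2, h⟩, fun ⟨g, hm, h⟩ => ⟨⟨g, hm⟩, h⟩⟩

theorem out_O {G : IGame} : out G .O ↔ ∀ g ∈ G.opts, out g .N := by
  rw [out]
  exact ⟨fun h g hm => h ⟨g, hm⟩, fun h g => h g.1 g.2⟩

theorem out_P {G : IGame} : out G .P ↔ ∀ g ∈ G.opts, out g .O := by
  rw [out]
  exact ⟨fun h g hm => h ⟨g, hm⟩, fun h g => h g.1 g.2⟩

def outcome (G : IGame) : Set Player := {p | out G p}

def nim : Nat → IGame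
  | 0 => mk []
  | n+1 => mk ((nim n).opts ++ [nim n])

end IGame

namespace IGame

theorem opts_add (x y : IGame) : (add x y).opts =
    (x.opts.attach.map fun g => add g.1 y) ++ (y.opts.attach.map fun h => add x h.1) := by
  rw [add]; rfl

theorem mem_opts_add {x y z : IGame} :
    z ∈ (add x y).opts ↔ (∃ g ∈ x.opts, z = add g y) ∨ (∃ h ∈ y.opts, z = add x h) := by
  rw [opts_add]
  constructor
  · intro hz
    rcases List.mem_append.mp hz with h | h
    · rcases List.mem_map.mp h with ⟨g, _, rfl⟩
      exact Or.inl ⟨g.1, g.2, rfl⟩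
    · rcases List.mem_map.mp h with ⟨g, _, rfl⟩
      exact Or.inr ⟨g.1, g.2, rfl⟩
  · rintro (⟨g, hg, rfl⟩ | ⟨h, hh, rfl⟩)
    · exact List.mem_append.mpr (Or.inl (List.mem_map.mpr ⟨⟨g, hg⟩, List.mem_attach _ _, rfl⟩))
    · exact List.mem_append.mpr (Or.inr (List.mem_map.mpr ⟨⟨h, hh⟩, List.mem_attach _ _, rfl⟩))

theorem add_mem_opts_left {x y g : IGame} (hg : g ∈ x.opts) : add g y ∈ (add x y).opts :=
  mem_opts_add.mpr (Or.inl ⟨g, hg, rfl⟩)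

theorem add_mem_opts_right {x y h : IGame} (hh : h ∈ y.opts) : add x h ∈ (add x y).opts :=
  mem_opts_add.mpr (Or.inr ⟨h, hh, rfl⟩)

def Equiv : IGame → IGame → Prop
  | x, y =>
    (∀ g : {a // a ∈ x.opts}, ∃ h : {b // b ∈ y.opts}, Equiv g.1 h.1) ∧
    (∀ h : {b // b ∈ y.opts}, ∃ g : {a // a ∈ x.opts}, Equiv g.1 h.1)
termination_by x y => sizeOf x + sizeOf y
decreasing_by
  all_goals
    first
    | (have := sizeOf_lt_of_mem g.2; have := sizeOf_lt_of_mem h.2; omega)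

theorem equiv_iff {x y : IGame} : Equiv x y ↔
    (∀ g ∈ x.opts, ∃ h ∈ y.opts, Equiv g h) ∧ (∀ h ∈ y.opts, ∃ g ∈ x.opts, Equiv g h) := by
  rw [Equiv]
  constructor
  · rintro ⟨h1, h2⟩
    refine ⟨fun g hg => ?_, fun h hh => ?_⟩
    · obtain ⟨h, hE⟩ := h1 ⟨g, hg⟩
      exact ⟨h.1, h.2, hE⟩
    · obtain ⟨g, hE⟩ := h2 ⟨h, hh⟩
      exact ⟨g.1, g.2, hE⟩
  · rintro ⟨h1, h2⟩
    refine ⟨fun g => ?_, fun h => ?_⟩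
    · obtain ⟨h, hh, hE⟩ := h1 g.1 g.2
      exact ⟨⟨h, hh⟩, hE⟩
    · obtain ⟨g, hg, hE⟩ := h2 h.1 h.2
      exact ⟨⟨g, hg⟩, hE⟩

theorem equiv_refl : ∀ (n : ℕ) (x : IGame), sizeOf x ≤ n → Equiv x x := by
  intro n
  induction n using Nat.strong_induction_on with
  | _ n ih =>
    intro x hx
    rw [equiv_iff]
    constructor <;>
    · intro g hg
      have hlt := sizeOf_lt_of_mem hg
      exact ⟨g, hg, ih (sizeOf g) (by omega) g le_rfl⟩

theorem equiv_refl' (x : IGame) : Equiv x x := equiv_refl (sizeOf x) x le_rfl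

theorem equiv_symm : ∀ (n : ℕ) (x y : IGame), sizeOf x + sizeOf y ≤ n →
    Equiv x y → Equiv y x := by
  intro n
  induction n using Nat.strong_induction_on with
  | _ n ih =>
    intro x y hn hxy
    rw [equiv_iff] at hxy ⊢
    obtain ⟨h1, h2⟩ := hxy
    constructor
    · intro h hh
      obtain ⟨g, hg, hE⟩ := h2 h hh
      have := sizeOf_lt_of_mem hg
      have := sizeOf_lt_of_mem hh
      exact ⟨g, hg, ih (sizeOf g + sizeOf h) (by omega) g h le_rfl hE⟩
    · intro g hg
      obtain ⟨h, hh, hE⟩ := h1 g hg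
      have := sizeOf_lt_of_mem hg
      have := sizeOf_lt_of_mem hh
      exact ⟨h, hh, ih (sizeOf g + sizeOf h) (by omega) g h le_rfl hE⟩

theorem equiv_symm' {x y : IGame} (h : Equiv x y) : Equiv y x :=
  equiv_symm (sizeOf x + sizeOf y) x y le_rfl h

theorem equiv_trans : ∀ (n : ℕ) (x y z : IGame), sizeOf x + sizeOf y + sizeOf z ≤ n →
    Equiv x y → Equiv y z → Equiv x z := by
  intro n
  induction n using Nat.strong_induction_on with
  | _ n ih =>
    intro x y z hn hxy hyz
    rw [equiv_iff] at hxy hyz ⊢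
    obtain ⟨h1, h2⟩ := hxy
    obtain ⟨h3, h4⟩ := hyz
    constructor
    · intro g hg
      obtain ⟨h, hh, hE1⟩ := h1 g hg
      obtain ⟨k, hk, hE2⟩ := h3 h hh
      have := sizeOf_lt_of_mem hg
      have := sizeOf_lt_of_mem hh
      have := sizeOf_lt_of_mem hk
      exact ⟨k, hk, ih (sizeOf g + sizeOf h + sizeOf k) (by omega) g h k le_rfl hE1 hE2⟩
    · intro k hk
      obtain ⟨h, hh, hE2⟩ := h4 k hk
      obtain ⟨g, hg, hE1⟩ := h2 h hh
      have := sizeOf_lt_of_mem hg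
      have := sizeOf_lt_of_mem hh
      have := sizeOf_lt_of_mem hk
      exact ⟨g, hg, ih (sizeOf g + sizeOf h + sizeOf k) (by omega) g h k le_rfl hE1 hE2⟩

theorem equiv_trans' {x y z : IGame} (h1 : Equiv x y) (h2 : Equiv y z) : Equiv x z :=
  equiv_trans (sizeOf x + sizeOf y + sizeOf z) x y z le_rfl h1 h2

theorem out_of_equiv : ∀ (n : ℕ) (x y : IGame), sizeOf x + sizeOf y ≤ n →
    Equiv x y → ∀ p, out x p → out y p := by
  intro n
  induction n using Nat.strong_induction_on with
  | _ n ih =>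
    intro x y hn hxy p hp
    obtain ⟨h1, h2⟩ := equiv_iff.mp hxy
    cases p with
    | N =>
      obtain ⟨g, hg, hgP⟩ := out_N.mp hp
      obtain ⟨h, hh, hE⟩ := h1 g hg
      have := sizeOf_lt_of_mem hg
      have := sizeOf_lt_of_mem hh
      exact out_N.mpr ⟨h, hh, ih (sizeOf g + sizeOf h) (by omega) g h le_rfl hE _ hgP⟩
    | O =>
      refine out_O.mpr fun h hh => ?_
      obtain ⟨g, hg, hE⟩ := h2 h hh
      have := sizeOf_lt_of_mem hg
      have := sizeOf_lt_of_mem hh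
      exact ih (sizeOf g + sizeOf h) (by omega) g h le_rfl hE _ (out_O.mp hp g hg)
    | P =>
      refine out_P.mpr fun h hh => ?_
      obtain ⟨g, hg, hE⟩ := h2 h hh
      have := sizeOf_lt_of_mem hg
      have := sizeOf_lt_of_mem hh
      exact ih (sizeOf g + sizeOf h) (by omega) g h le_rfl hE _ (out_P.mp hp g hg)

theorem out_congr {x y : IGame} (h : Equiv x y) (p : Player) : out x p ↔ out y p :=
  ⟨out_of_equiv _ x y le_rfl h p, out_of_equiv _ y x le_rfl (equiv_symm' h) p⟩

theorem add_congr : ∀ (n : ℕ) (x x' y y' : IGame),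
    sizeOf x + sizeOf x' + sizeOf y + sizeOf y' ≤ n →
    Equiv x x' → Equiv y y' → Equiv (add x y) (add x' y') := by
  intro n
  induction n using Nat.strong_induction_on with
  | _ n ih =>
    intro x x' y y' hn hx hy
    obtain ⟨hx1, hx2⟩ := equiv_iff.mp hx
    obtain ⟨hy1, hy2⟩ := equiv_iff.mp hy
    rw [equiv_iff]
    constructor
    · intro z hz
      rcases mem_opts_add.mp hz with ⟨g, hg, rfl⟩ | ⟨h, hh, rfl⟩
      · obtain ⟨g', hg', hE⟩ := hx1 g hg
        have := sizeOf_lt_of_mem hg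
        have := sizeOf_lt_of_mem hg'
        exact ⟨add g' y', add_mem_opts_left hg',
          ih (sizeOf g + sizeOf g' + sizeOf y + sizeOf y') (by omega) g g' y y' le_rfl hE hy⟩
      · obtain ⟨h', hh', hE⟩ := hy1 h hh
        have := sizeOf_lt_of_mem hh
        have := sizeOf_lt_of_mem hh'
        exact ⟨add x' h', add_mem_opts_right hh',
          ih (sizeOf x + sizeOf x' + sizeOf h + sizeOf h') (by omega) x x' h h' le_rfl hx hE⟩
    · intro z hz
      rcases mem_opts_add.mp hz with ⟨g', hg', rfl⟩ | ⟨h', hh', rfl⟩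
      · obtain ⟨g, hg, hE⟩ := hx2 g' hg'
        have := sizeOf_lt_of_mem hg
        have := sizeOf_lt_of_mem hg'
        exact ⟨add g y, add_mem_opts_left hg,
          ih (sizeOf g + sizeOf g' + sizeOf y + sizeOf y') (by omega) g g' y y' le_rfl hE hy⟩
      · obtain ⟨h, hh, hE⟩ := hy2 h' hh'
        have := sizeOf_lt_of_mem hh
        have := sizeOf_lt_of_mem hh'
        exact ⟨add x h, add_mem_opts_right hh,
          ih (sizeOf x + sizeOf x' + sizeOf h + sizeOf h') (by omega) x x' h h' le_rfl hx hE⟩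

theorem add_congr' {x x' y y' : IGame} (hx : Equiv x x') (hy : Equiv y y') :
    Equiv (add x y) (add x' y') :=
  add_congr _ x x' y y' le_rfl hx hy

theorem add_comm_equiv : ∀ (n : ℕ) (x y : IGame), sizeOf x + sizeOf y ≤ n →
    Equiv (add x y) (add y x) := by
  intro n
  induction n using Nat.strong_induction_on with
  | _ n ih =>
    intro x y hn
    rw [equiv_iff]
    constructor
    · intro z hz
      rcases mem_opts_add.mp hz with ⟨g, hg, rfl⟩ | ⟨h, hh, rfl⟩
      · have := sizeOf_lt_of_mem hg
        exact ⟨add y g, add_mem_opts_right hg, ih (sizeOf g + sizeOf y) (by omega) g y le_rfl⟩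
      · have := sizeOf_lt_of_mem hh
        exact ⟨add h x, add_mem_opts_left hh, ih (sizeOf x + sizeOf h) (by omega) x h le_rfl⟩
    · intro z hz
      rcases mem_opts_add.mp hz with ⟨h, hh, rfl⟩ | ⟨g, hg, rfl⟩
      · have := sizeOf_lt_of_mem hh
        exact ⟨add x h, add_mem_opts_right hh,
          equiv_symm' (ih (sizeOf h + sizeOf x) (by omega) h x le_rfl)⟩
      · have := sizeOf_lt_of_mem hg
        exact ⟨add g y, add_mem_opts_left hg,
          equiv_symm' (ih (sizeOf y + sizeOf g) (by omega) y g le_rfl)⟩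

theorem add_comm_equiv' (x y : IGame) : Equiv (add x y) (add y x) :=
  add_comm_equiv _ x y le_rfl

theorem add_assoc_equiv : ∀ (n : ℕ) (x y z : IGame), sizeOf x + sizeOf y + sizeOf z ≤ n →
    Equiv (add (add x y) z) (add x (add y z)) := by
  intro n
  induction n using Nat.strong_induction_on with
  | _ n ih =>
    intro x y z hn
    rw [equiv_iff]
    constructor
    · intro w hw
      rcases mem_opts_add.mp hw with ⟨u, hu, rfl⟩ | ⟨k, hk, rfl⟩
      · rcases mem_opts_add.mp hu with ⟨g, hg, rfl⟩ | ⟨h, hh, rfl⟩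
        · have := sizeOf_lt_of_mem hg
          exact ⟨add g (add y z), add_mem_opts_left hg,
            ih (sizeOf g + sizeOf y + sizeOf z) (by omega) g y z le_rfl⟩
        · have := sizeOf_lt_of_mem hh
          exact ⟨add x (add h z), add_mem_opts_right (add_mem_opts_left hh),
            ih (sizeOf x + sizeOf h + sizeOf z) (by omega) x h z le_rfl⟩
      · have := sizeOf_lt_of_mem hk
        exact ⟨add x (add y k), add_mem_opts_right (add_mem_opts_right hk),
          ih (sizeOf x + sizeOf y + sizeOf k) (by omega) x y k le_rfl⟩
    · intro w hw
      rcases mem_opts_add.mp hw with ⟨g, hg, rfl⟩ | ⟨u, hu, rfl⟩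
      · have := sizeOf_lt_of_mem hg
        exact ⟨add (add g y) z, add_mem_opts_left (add_mem_opts_left hg),
          ih (sizeOf g + sizeOf y + sizeOf z) (by omega) g y z le_rfl⟩
      · rcases mem_opts_add.mp hu with ⟨h, hh, rfl⟩ | ⟨k, hk, rfl⟩
        · have := sizeOf_lt_of_mem hh
          exact ⟨add (add x h) z, add_mem_opts_left (add_mem_opts_right hh),
            ih (sizeOf x + sizeOf h + sizeOf z) (by omega) x h z le_rfl⟩
        · have := sizeOf_lt_of_mem hk
          exact ⟨add (add x y) k, add_mem_opts_right hk,
            ih (sizeOf x + sizeOf y + sizeOf k) (by omega) x y k le_rfl⟩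

theorem add_assoc_equiv' (x y z : IGame) : Equiv (add (add x y) z) (add x (add y z)) :=
  add_assoc_equiv _ x y z le_rfl

/-- No game has all three outcomes. -/
theorem not_all_three : ∀ (n : ℕ) (X : IGame), sizeOf X ≤ n →
    ¬(out X .N ∧ out X .O ∧ out X .P) := by
  intro n
  induction n using Nat.strong_induction_on with
  | _ n ih =>
    rintro X hX ⟨hN, hO, hP⟩
    obtain ⟨g, hg, hgP⟩ := out_N.mp hN
    have hlt := sizeOf_lt_of_mem hg
    exact ih (sizeOf g) (by omega) g le_rfl ⟨out_O.mp hO g hg, out_P.mp hP g hg, hgP⟩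

/-- The key transfer lemma for sums. -/
theorem transfer : ∀ (n : ℕ) (x K : IGame), sizeOf x + sizeOf K ≤ n →
    (out (add x K) .P → out x .P ∨ out K .N) ∧
    (out (add x K) .O → out x .O ∨ out K .N) ∧
    (out (add x K) .N → out x .N ∨ out K .N) := by
  intro n
  induction n using Nat.strong_induction_on with
  | _ n ih =>
    intro x K hn
    refine ⟨fun hP => ?_, fun hO => ?_, fun hN => ?_⟩
    · by_cases hxP : out x .P
      · exact Or.inl hxP
      · rw [out_P] at hxP
        push_neg at hxP
        obtain ⟨x0, hx0, hx0O⟩ := hxP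
        have hopt : out (add x0 K) .O := out_P.mp hP _ (add_mem_opts_left hx0)
        have := sizeOf_lt_of_mem hx0
        rcases (ih (sizeOf x0 + sizeOf K) (by omega) x0 K le_rfl).2.1 hopt with h | h
        · exact absurd h hx0O
        · exact Or.inr h
    · by_cases hxO : out x .O
      · exact Or.inl hxO
      · rw [out_O] at hxO
        push_neg at hxO
        obtain ⟨x1, hx1, hx1N⟩ := hxO
        have hopt : out (add x1 K) .N := out_O.mp hO _ (add_mem_opts_left hx1)
        have := sizeOf_lt_of_mem hx1
        rcases (ih (sizeOf x1 + sizeOf K) (by omega) x1 K le_rfl).2.2 hopt with h | h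
        · exact absurd h hx1N
        · exact Or.inr h
    · obtain ⟨z, hz, hzP⟩ := out_N.mp hN
      rcases mem_opts_add.mp hz with ⟨g, hg, rfl⟩ | ⟨k, hk, rfl⟩
      · have := sizeOf_lt_of_mem hg
        rcases (ih (sizeOf g + sizeOf K) (by omega) g K le_rfl).1 hzP with h | h
        · exact Or.inl (out_N.mpr ⟨g, hg, h⟩)
        · exact Or.inr h
      · have := sizeOf_lt_of_mem hk
        have hzP' : out (add k x) .P := (out_congr (add_comm_equiv' x k) .P).mp hzP
        rcases (ih (sizeOf k + sizeOf x) (by omega) k x le_rfl).1 hzP' with h | h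
        · exact Or.inr (out_N.mpr ⟨k, hk, h⟩)
        · exact Or.inl h

section Queer

variable {G : IGame}

theorem queer_LO (hGN : ¬ out G .N) (hGO : ¬ out G .O) (K : IGame)
    (hO : out (add G K) .O) : out K .O ∧ out K .N ∧ ¬ out K .P := by
  have hKO : out K .O := by
    refine out_O.mpr fun K' hK' => ?_
    have h1 : out (add G K') .N := out_O.mp hO _ (add_mem_opts_right hK')
    rcases (transfer _ G K' le_rfl).2.2 h1 with h | h
    · exact absurd h hGN
    · exact h
  have hKN : out K .N := by
    rw [out_O] at hGO
    push_neg at hGO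
    obtain ⟨g1, hg1, hg1N⟩ := hGO
    have h1 : out (add g1 K) .N := out_O.mp hO _ (add_mem_opts_left hg1)
    rcases (transfer _ g1 K le_rfl).2.2 h1 with h | h
    · exact absurd h hg1N
    · exact h
  refine ⟨hKO, hKN, fun hKP => ?_⟩
  obtain ⟨K', hK', hKP'⟩ := out_N.mp hKN
  exact not_all_three _ K' le_rfl ⟨out_O.mp hKO K' hK', out_P.mp hKP K' hK', hKP'⟩

theorem queer_LP (hGN : ¬ out G .N) (hGO : ¬ out G .O) (hGP : ¬ out G .P) (K : IGame) :
    ¬ out (add G K) .P := by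
  intro hP
  rw [out_P] at hGP
  push_neg at hGP
  obtain ⟨g0, hg0, hg0O⟩ := hGP
  have h1 : out (add g0 K) .O := out_P.mp hP _ (add_mem_opts_left hg0)
  have hKN : out K .N := by
    rcases (transfer _ g0 K le_rfl).2.1 h1 with h | h
    · exact absurd h hg0O
    · exact h
  obtain ⟨K', hK', hKP'⟩ := out_N.mp hKN
  have h2 : out (add G K') .O := out_P.mp hP _ (add_mem_opts_right hK')
  exact (queer_LO hGN hGO K' h2).2.2 hKP'

theorem queer_LN (hGN : ¬ out G .N) (hGO : ¬ out G .O) (hGP : ¬ out G .P) (M : IGame) :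
    ¬ out (add G (add G M)) .N := by
  intro hN
  obtain ⟨z, hz, hzP⟩ := out_N.mp hN
  rcases mem_opts_add.mp hz with ⟨g, hg, rfl⟩ | ⟨w, hw, rfl⟩
  · -- g + (G + M) ≈ (G + M) + g ≈ G + (M + g)
    have hE : Equiv (add g (add G M)) (add G (add M g)) :=
      equiv_trans' (add_comm_equiv' g (add G M)) (add_assoc_equiv' G M g)
    exact queer_LP hGN hGO hGP (add M g) ((out_congr hE .P).mp hzP)
  · exact queer_LP hGN hGO hGP w hzP

end Queer

end IGame


open IGame in
/-- If `G` is undetermined then `G+G+G` is absorbing. -/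
theorem triple_undetermined_absorbing (G : IGame) (hG : IGame.outcome G = ∅) :
    ∀ H : IGame, IGame.outcome (IGame.add (IGame.add (IGame.add G G) G) H) = ∅ := by
  have hall : ∀ p, ¬ IGame.out G p := fun p hp =>
    Set.eq_empty_iff_forall_notMem.mp hG p hp
  have hGN := hall .N
  have hGO := hall .O
  have hGP := hall .P
  intro H
  apply Set.eq_empty_iff_forall_notMem.mpr
  intro p hp
  have hp' : IGame.out (IGame.add (IGame.add (IGame.add G G) G) H) p := hp
  have hE : Equiv (add (add (add G G) G) H) (add G (add G (add G H))) :=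
    equiv_trans' (add_assoc_equiv' (add G G) G H) (add_assoc_equiv' G G (add G H))
  cases p with
  | N => exact queer_LN hGN hGO hGP (add G H) ((out_congr hE .N).mp hp')
  | P => exact queer_LP hGN hGO hGP (add G (add G H)) ((out_congr hE .P).mp hp')
  | O =>
    have hne : G.opts ≠ [] := by
      intro h
      exact hGP (out_P.mpr (by rw [h]; simp))
    obtain ⟨g, hg⟩ := List.exists_mem_of_ne_nil _ hne
    have hmem : add (add (add g G) G) H ∈ (add (add (add G G) G) H).opts :=
      add_mem_opts_left (add_mem_opts_left (add_mem_opts_left hg))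
    have hN : out (add (add (add g G) G) H) .N := out_O.mp hp' _ hmem
    have hE2 : Equiv (add (add (add g G) G) H) (add G (add G (add H g))) :=
      equiv_trans' (add_assoc_equiv' (add g G) G H) <|
      equiv_trans' (add_assoc_equiv' g G (add G H)) <|
      equiv_trans' (add_comm_equiv' g (add G (add G H))) <|
      equiv_trans' (add_assoc_equiv' G (add G H) g)
        (add_congr' (equiv_refl' G) (add_assoc_equiv' G H g))
    exact queer_LN hGN hGO hGP (add H g) ((out_congr hE2 .N).mp hN)
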